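/- arXiv:2206.12061 — 2 statements merged into one kernel-verified Lean document; each statement's English description precedes it below -/
import Mathlib

section
/- Let P be symmetric positive definite, F monotone, and z_* a point with 0 ∈ F(z_*). If P(z_i - z_{i+1}) ∈ F(z_{i+1}) for each i, then for every i: ‖z_i - z_*‖²_P ≥ ‖z_{i+1} - z_*‖²_P + ‖P(z_i - z_{i+1})‖²_{P^{-1}}. In particular, dist²_{P^{-1}}(0, F(z_{i+1})) ≤ ‖z_i - z_*‖²_P - ‖z_{i+1} - z_*‖²_P. -/
/-!
Write `w = z - z'` for the step and `b = z' - z⋆`. Expanding `‖b + w‖²_P` gives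
`‖z - z⋆‖²_P = ‖b‖²_P + ‖w‖²_P + 2⟨P w, b⟩`, and `‖w‖²_P = ‖P w‖²_{P⁻¹}`. Monotonicity of `F`,
applied to `P w ∈ F z'` and `0 ∈ F z⋆`, says exactly that the cross term `⟨P w, b⟩` is
nonnegative. The distance bound follows because `P w` is one of the points of `F z'`.
-/

open Matrix

/-- Quadratic form `⟨v, G v⟩`. -/
def qf {ι : Type*} [Fintype ι] (G : Matrix ι ι ℝ) (v : ι → ℝ) : ℝ := v ⬝ᵥ G.mulVec v

/-- Squared distance (in the quadratic form of `G`) from `0` to a set `S`. -/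
noncomputable def distSqTo {ι : Type*} [Fintype ι] (G : Matrix ι ι ℝ)
    (S : Set (ι → ℝ)) : ℝ := sInf (qf G '' S)

section QuadraticForm

variable {ι : Type*} [Fintype ι] {G : Matrix ι ι ℝ}

lemma Matrix.IsSymm.dotProduct_mulVec_comm (hG : G.IsSymm) (v w : ι → ℝ) :
    v ⬝ᵥ G *ᵥ w = G *ᵥ v ⬝ᵥ w := by
  rw [dotProduct_mulVec, ← mulVec_transpose, hG.eq]

lemma qf_add (hG : G.IsSymm) (v w : ι → ℝ) :
    qf G (v + w) = qf G v + qf G w + 2 * (G *ᵥ w ⬝ᵥ v) := by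
  have hvw : v ⬝ᵥ G *ᵥ w = G *ᵥ w ⬝ᵥ v := dotProduct_comm _ _
  have hwv : w ⬝ᵥ G *ᵥ v = G *ᵥ w ⬝ᵥ v := hG.dotProduct_mulVec_comm w v
  simp only [qf, mulVec_add, dotProduct_add, add_dotProduct]
  linarith

lemma qf_inv_mulVec [DecidableEq ι] (hG : G.IsSymm) (hdet : IsUnit G.det) (w : ι → ℝ) :
    qf G⁻¹ (G *ᵥ w) = qf G w := by
  rw [qf, qf, mulVec_mulVec, nonsing_inv_mul G hdet, one_mulVec, hG.dotProduct_mulVec_comm]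

lemma Matrix.PosSemidef.qf_nonneg (hG : G.PosSemidef) (v : ι → ℝ) : 0 ≤ qf G v :=
  hG.dotProduct_mulVec_nonneg v

lemma distSqTo_le_qf (hG : G.PosSemidef) {S : Set (ι → ℝ)} {v : ι → ℝ} (hv : v ∈ S) :
    distSqTo G S ≤ qf G v := by
  refine csInf_le ⟨0, ?_⟩ ⟨v, hv, rfl⟩
  rintro _ ⟨u, -, rfl⟩
  exact hG.qf_nonneg u

end QuadraticForm

lemma qf_sub_add_qf_inv_le {ι : Type*} [Fintype ι] [DecidableEq ι] {P : Matrix ι ι ℝ}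
    (hP : P.IsSymm) (hdet : IsUnit P.det) {z z' zstar : ι → ℝ}
    (hcross : 0 ≤ P *ᵥ (z - z') ⬝ᵥ (z' - zstar)) :
    qf P (z' - zstar) + qf P⁻¹ (P *ᵥ (z - z')) ≤ qf P (z - zstar) := by
  have hsplit : z - zstar = (z' - zstar) + (z - z') := by abel
  rw [hsplit, qf_add hP, qf_inv_mulVec hP hdet]
  linarith

theorem stmt5 {d : ℕ} (P : Matrix (Fin d) (Fin d) ℝ) (hP : P.PosDef)
    (F : (Fin d → ℝ) → Set (Fin d → ℝ))
    (hmono : ∀ z z' u v, u ∈ F z → v ∈ F z' → 0 ≤ (u - v) ⬝ᵥ (z - z'))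
    (zstar : Fin d → ℝ) (hzstar : (0 : Fin d → ℝ) ∈ F zstar)
    (zi zi1 : Fin d → ℝ) (hstep : P.mulVec (zi - zi1) ∈ F zi1) :
    qf P (zi1 - zstar) + qf P⁻¹ (P.mulVec (zi - zi1)) ≤ qf P (zi - zstar) ∧
    distSqTo P⁻¹ (F zi1) ≤ qf P (zi - zstar) - qf P (zi1 - zstar) := by
  have hcross : 0 ≤ P *ᵥ (zi - zi1) ⬝ᵥ (zi1 - zstar) := by
    simpa using hmono zi1 zstar _ 0 hstep hzstar
  have hfejer := qf_sub_add_qf_inv_le (isHermitian_iff_isSymm.mp hP.1)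
    ((isUnit_iff_isUnit_det P).mp hP.isUnit) hcross
  have hdist := distSqTo_le_qf hP.inv.posSemidef hstep
  exact ⟨hfejer, by linarith⟩
end

section
/- Let P be symmetric positive semidefinite, F monotone, and suppose P(z_k - z_{k+1}) ∈ F(z_{k+1}) for all k. Then the generalized IDS is non-increasing: dist²_{P^-}(0, F(z_{k+1}) ∩ range(P)) ≤ dist²_{P^-}(0, F(z_k) ∩ range(P)), with decrease at least ‖ω̃_{k+1} - ω_k‖²_{P^-} where ω̃_{k+1} = P(z_k - z_{k+1}) and ω_k is the minimizer at step k. -/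
/-!
On `range P` the `P⁻`-seminorm is the `P`-seminorm of a preimage: `‖P a‖²_{P⁻} = ⟨a, P a⟩`,
because `P P⁻ P = P`. Writing `ω̃_{k+1} = P u` with `u = z_k - z_{k+1}` and `ω_k = P v`, the claimed
decrease `‖P u‖²_{P⁻} + ‖P u - P v‖²_{P⁻} ≤ ‖P v‖²_{P⁻}` becomes, after expanding the square,
`⟨P u - P v, u⟩ ≤ 0`, which is monotonicity of `F` at `z_k`, `z_{k+1}`. Since `P u` is feasible at
step `k + 1` and `‖·‖²_{P⁻} ≥ 0` on `range P`, the infimum there is at most `‖P u‖²_{P⁻}`.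
-/

open Matrix

/-- The range (column space) of a matrix, as a set of vectors. -/
def mrange {ι : Type*} [Fintype ι] (P : Matrix ι ι ℝ) : Set (ι → ℝ) :=
  {w | ∃ u, w = P.mulVec u}

section QuadraticForm

variable {ι : Type*} [Fintype ι] {P Pm : Matrix ι ι ℝ}

lemma Matrix.IsSymm.dotProduct_mulVec_comm_s18 (hP : P.IsSymm) (x y : ι → ℝ) :
    x ⬝ᵥ P *ᵥ y = y ⬝ᵥ P *ᵥ x := by
  conv_lhs => rw [← hP.eq]
  exact dotProduct_transpose_mulVec P x y

lemma qf_sub (hP : P.IsSymm) (u v : ι → ℝ) :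
    qf P (u - v) = qf P u - 2 * (u ⬝ᵥ P *ᵥ v) + qf P v := by
  simp only [qf, mulVec_sub, sub_dotProduct, dotProduct_sub, hP.dotProduct_mulVec_comm_s18 v u]
  ring

lemma qf_nonneg (hP : P.PosSemidef) (x : ι → ℝ) : 0 ≤ qf P x := by
  simpa [qf] using hP.dotProduct_mulVec_nonneg x

lemma qf_mulVec_of_mul_mul_eq (hP : P.IsSymm) (hPm : P * Pm * P = P) (a : ι → ℝ) :
    qf Pm (P *ᵥ a) = qf P a := by
  rw [qf, qf, mulVec_mulVec, dotProduct_comm, ← dotProduct_transpose_mulVec, hP.eq,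
    mulVec_mulVec, ← mul_assoc, hPm]

lemma bddBelow_qf_image_inter_mrange (hP : P.PosSemidef) (hPm : P * Pm * P = P)
    (S : Set (ι → ℝ)) : BddBelow (qf Pm '' (S ∩ mrange P)) := by
  refine ⟨0, ?_⟩
  rintro _ ⟨_, ⟨-, a, rfl⟩, rfl⟩
  rw [qf_mulVec_of_mul_mul_eq (isHermitian_iff_isSymm.mp hP.1) hPm]
  exact qf_nonneg hP a

lemma qf_mulVec_le_of_dotProduct_sub_nonpos (hP : P.IsSymm) (hPm : P * Pm * P = P)
    {u v : ι → ℝ} (h : (P *ᵥ u - P *ᵥ v) ⬝ᵥ u ≤ 0) :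
    qf Pm (P *ᵥ u) ≤ qf Pm (P *ᵥ v) - qf Pm (P *ᵥ u - P *ᵥ v) := by
  rw [← mulVec_sub, qf_mulVec_of_mul_mul_eq hP hPm, qf_mulVec_of_mul_mul_eq hP hPm,
    qf_mulVec_of_mul_mul_eq hP hPm, qf_sub hP]
  rw [sub_dotProduct, dotProduct_comm, dotProduct_comm (P *ᵥ v)] at h
  unfold qf
  linarith

end QuadraticForm

theorem stmt18_general {d : ℕ} (P Pm : Matrix (Fin d) (Fin d) ℝ)
    (hP : P.PosSemidef)
    (hp1 : P * Pm * P = P)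
    (F : (Fin d → ℝ) → Set (Fin d → ℝ))
    (hmono : ∀ z z' u v, u ∈ F z → v ∈ F z' → 0 ≤ (u - v) ⬝ᵥ (z - z'))
    (z : ℕ → Fin d → ℝ)
    (hstep : ∀ i, P.mulVec (z i - z (i+1)) ∈ F (z (i+1)))
    (k : ℕ)
    (ωk : Fin d → ℝ) (hωk : ωk ∈ F (z k) ∩ mrange P)
    (hmin : qf Pm ωk = sInf (qf Pm '' (F (z k) ∩ mrange P))) :
    sInf (qf Pm '' (F (z (k+1)) ∩ mrange P))
      ≤ sInf (qf Pm '' (F (z k) ∩ mrange P))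
        - qf Pm (P.mulVec (z k - z (k+1)) - ωk) := by
  obtain ⟨hωkF, v, rfl⟩ := hωk
  set u := z k - z (k+1)
  have hdescent : (P *ᵥ u - P *ᵥ v) ⬝ᵥ u ≤ 0 := by
    have := hmono _ _ _ _ hωkF (hstep k)
    rw [← neg_sub, neg_dotProduct] at this
    linarith
  calc sInf (qf Pm '' (F (z (k+1)) ∩ mrange P))
      ≤ qf Pm (P *ᵥ u) :=
        csInf_le (bddBelow_qf_image_inter_mrange hP hp1 _) ⟨_, ⟨hstep k, u, rfl⟩, rfl⟩
    _ ≤ qf Pm (P *ᵥ v) - qf Pm (P *ᵥ u - P *ᵥ v) :=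
        qf_mulVec_le_of_dotProduct_sub_nonpos (isHermitian_iff_isSymm.mp hP.1) hp1 hdescent
    _ = _ := by rw [hmin]

/-- Monotone decay of the generalized IDS for a positive semidefinite `P`
(with Moore–Penrose pseudo-inverse `Pm`): if `ω_k` is the minimizer at step `k`,
then the IDS decreases by at least `‖ω̃_{k+1} - ω_k‖²_{P⁻}` where
`ω̃_{k+1} = P(z_k - z_{k+1})`. -/
theorem stmt18 {d : ℕ} (P Pm : Matrix (Fin d) (Fin d) ℝ)
    (hP : P.PosSemidef)
    (hp1 : P * Pm * P = P) (hp2 : Pm * P * Pm = Pm)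
    (hp3 : (P * Pm)ᵀ = P * Pm) (hp4 : (Pm * P)ᵀ = Pm * P)
    (F : (Fin d → ℝ) → Set (Fin d → ℝ))
    (hmono : ∀ z z' u v, u ∈ F z → v ∈ F z' → 0 ≤ (u - v) ⬝ᵥ (z - z'))
    (z : ℕ → Fin d → ℝ)
    (hstep : ∀ i, P.mulVec (z i - z (i+1)) ∈ F (z (i+1)))
    (k : ℕ)
    (ωk : Fin d → ℝ) (hωk : ωk ∈ F (z k) ∩ mrange P)
    (hmin : qf Pm ωk = sInf (qf Pm '' (F (z k) ∩ mrange P))) :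
    sInf (qf Pm '' (F (z (k+1)) ∩ mrange P))
      ≤ sInf (qf Pm '' (F (z k) ∩ mrange P))
        - qf Pm (P.mulVec (z k - z (k+1)) - ωk) :=
  stmt18_general P Pm hP hp1 F hmono z hstep k ωk hωk hmin
end
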